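/- The join and meet operations on punctual degrees distribute: for coinfinite primitive recursive sets X, Y, Z, we have R_X ∨ (R_Y ∧ R_Z) ≡_pr (R_X ∨ R_Y) ∧ (R_X ∨ R_Z), where ∨ and ∧ denote the supremum and infimum constructions defined via #(0^U)[s]-counts taking pointwise max and min respectively. -/

import Mathlib

/-- The equivalence relation `R_X`: `x R_X y` iff both in `X` or `x = y`. -/
def REq (X : Set ℕ) (x y : ℕ) : Prop := (x ∈ X ∧ y ∈ X) ∨ x = y

/-- Primitive recursive reducibility between binary relations on ℕ. -/
def PrRed (R S : ℕ → ℕ → Prop) : Prop :=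
  ∃ f : ℕ → ℕ, Primrec f ∧ ∀ x y, R x y ↔ S (f x) (f y)

/-- pr-bireducibility. -/
def PrEquiv (R S : ℕ → ℕ → Prop) : Prop := PrRed R S ∧ PrRed S R

/-- `X` is a primitive recursive set. -/
def PRSet (X : Set ℕ) : Prop :=
  ∃ f : ℕ → Bool, Primrec f ∧ ∀ n, n ∈ X ↔ f n = true

/-- `#(0^X)[s]`: the number of elements of the complement of `X` that are `≤ s`. -/
noncomputable def zc (X : Set ℕ) (s : ℕ) : ℕ := {k | k ≤ s ∧ k ∉ X}.ncard

/-- The join of two sets, via pointwise max of zero-counts. -/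
noncomputable def joinSet (U V : Set ℕ) : Set ℕ :=
  {n | n = 0 ∨ ∃ s, n = s + 1 ∧ max (zc U (s+1)) (zc V (s+1)) ≤ max (zc U s) (zc V s)}

/-- The meet of two sets, via pointwise min of zero-counts. -/
noncomputable def meetSet (U V : Set ℕ) : Set ℕ :=
  {n | n = 0 ∨ ∃ s, n = s + 1 ∧ min (zc U (s+1)) (zc V (s+1)) ≤ min (zc U s) (zc V s)}

/-! A set is determined by its zero-count `zc`, and for sets containing `0` the zero-count of
`joinSet U V` (resp. `meetSet U V`) is the pointwise max (resp. min) of those of `U` and `V`.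
Hence the distributive law `max x (min y z) = min (max x y) (max x z)` makes the two sets
equal, and the two relations coincide. -/

open Classical in
lemma zc_eq_count (U : Set ℕ) (s : ℕ) : zc U s = Nat.count (· ∉ U) (s + 1) := by
  rw [Nat.count_eq_card_filter_range, zc, ← Set.ncard_coe_finset]
  congr 1
  ext k
  simp

lemma zc_zero_eq_zero_iff (U : Set ℕ) : zc U 0 = 0 ↔ 0 ∈ U := by
  classical
  simp [zc_eq_count, Nat.count_one]

open Classical in
lemma zc_succ (U : Set ℕ) (s : ℕ) :
    zc U (s + 1) = zc U s + if s + 1 ∈ U then 0 else 1 := by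
  rw [zc_eq_count, zc_eq_count, Nat.count_succ]
  split_ifs <;> simp_all

lemma zc_succ_eq_iff (U : Set ℕ) (s : ℕ) : zc U (s + 1) = zc U s ↔ s + 1 ∈ U := by
  classical
  rw [zc_succ]
  split_ifs <;> simp_all

lemma zc_succ_le (U : Set ℕ) (s : ℕ) : zc U (s + 1) ≤ zc U s + 1 := by
  classical
  rw [zc_succ]
  split_ifs <;> simp

lemma zc_monotone (U : Set ℕ) : Monotone (zc U) := by
  classical
  exact monotone_nat_of_le_succ fun s => by rw [zc_succ]; exact Nat.le_add_right _ _

lemma zc_injective : Function.Injective zc := by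
  intro U V h
  ext (_ | s)
  · rw [← zc_zero_eq_zero_iff, ← zc_zero_eq_zero_iff, h]
  · rw [← zc_succ_eq_iff, ← zc_succ_eq_iff, h]

/-- The set whose zero-count is `f`, when `f 0 = 0` and `f` grows by steps of `0` or `1`. -/
def ofZeroCount (f : ℕ → ℕ) : Set ℕ := {n | n = 0 ∨ ∃ s, n = s + 1 ∧ f (s + 1) ≤ f s}

lemma zero_mem_ofZeroCount (f : ℕ → ℕ) : 0 ∈ ofZeroCount f := Or.inl rfl

lemma succ_mem_ofZeroCount_iff (f : ℕ → ℕ) (s : ℕ) :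
    s + 1 ∈ ofZeroCount f ↔ f (s + 1) ≤ f s := by
  simp [ofZeroCount]

lemma zc_ofZeroCount {f : ℕ → ℕ} (h0 : f 0 = 0) (hf : Monotone f)
    (hstep : ∀ s, f (s + 1) ≤ f s + 1) : zc (ofZeroCount f) = f := by
  classical
  funext s
  induction s with
  | zero => rw [h0, zc_zero_eq_zero_iff]; exact zero_mem_ofZeroCount f
  | succ s ih =>
    have := hf (Nat.le_add_right s 1)
    have := hstep s
    rw [zc_succ, ih, succ_mem_ofZeroCount_iff]
    split_ifs <;> omega

lemma joinSet_eq_ofZeroCount (U V : Set ℕ) :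
    joinSet U V = ofZeroCount fun s => max (zc U s) (zc V s) := rfl

lemma meetSet_eq_ofZeroCount (U V : Set ℕ) :
    meetSet U V = ofZeroCount fun s => min (zc U s) (zc V s) := rfl

lemma zc_joinSet {U V : Set ℕ} (hU : 0 ∈ U) (hV : 0 ∈ V) :
    zc (joinSet U V) = fun s => max (zc U s) (zc V s) := by
  rw [joinSet_eq_ofZeroCount]
  refine zc_ofZeroCount ?_ ((zc_monotone U).max (zc_monotone V)) fun s => ?_
  · simp [(zc_zero_eq_zero_iff U).2 hU, (zc_zero_eq_zero_iff V).2 hV]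
  · have := zc_succ_le U s
    have := zc_succ_le V s
    omega

lemma zc_meetSet {U V : Set ℕ} (hU : 0 ∈ U) (hV : 0 ∈ V) :
    zc (meetSet U V) = fun s => min (zc U s) (zc V s) := by
  rw [meetSet_eq_ofZeroCount]
  refine zc_ofZeroCount ?_ ((zc_monotone U).min (zc_monotone V)) fun s => ?_
  · simp [(zc_zero_eq_zero_iff U).2 hU, (zc_zero_eq_zero_iff V).2 hV]
  · have := zc_succ_le U s
    have := zc_succ_le V s
    omega

lemma joinSet_meetSet_distrib {X Y Z : Set ℕ} (hX : 0 ∈ X) (hY : 0 ∈ Y) (hZ : 0 ∈ Z) :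
    joinSet X (meetSet Y Z) = meetSet (joinSet X Y) (joinSet X Z) := by
  apply zc_injective
  have hYZ : 0 ∈ meetSet Y Z := Or.inl rfl
  have hXY : 0 ∈ joinSet X Y := Or.inl rfl
  have hXZ : 0 ∈ joinSet X Z := Or.inl rfl
  rw [zc_joinSet hX hYZ, zc_meetSet hY hZ, zc_meetSet hXY hXZ, zc_joinSet hX hY,
    zc_joinSet hX hZ]
  funext s
  exact max_min_distrib_left _ _ _

lemma PrRed.refl (R : ℕ → ℕ → Prop) : PrRed R R := ⟨id, Primrec.id, fun _ _ => Iff.rfl⟩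

lemma PrEquiv.refl (R : ℕ → ℕ → Prop) : PrEquiv R R := ⟨PrRed.refl R, PrRed.refl R⟩

theorem stmt_10_general (X Y Z : Set ℕ)
    (hX0 : 0 ∈ X) (hY0 : 0 ∈ Y) (hZ0 : 0 ∈ Z) :
    PrEquiv (REq (joinSet X (meetSet Y Z)))
            (REq (meetSet (joinSet X Y) (joinSet X Z))) := by
  rw [joinSet_meetSet_distrib hX0 hY0 hZ0]
  exact PrEquiv.refl _

theorem stmt_10 (X Y Z : Set ℕ) (hX : PRSet X) (hY : PRSet Y) (hZ : PRSet Z)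
    (hXc : Xᶜ.Infinite) (hYc : Yᶜ.Infinite) (hZc : Zᶜ.Infinite)
    (hX0 : 0 ∈ X) (hY0 : 0 ∈ Y) (hZ0 : 0 ∈ Z) :
    PrEquiv (REq (joinSet X (meetSet Y Z)))
            (REq (meetSet (joinSet X Y) (joinSet X Z))) :=
  stmt_10_general X Y Z hX0 hY0 hZ0
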